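/- For a multiplicative function f and n = ∏_{i=1}^r p_i^{s_i}, Σ_{k=1}^n f(gcd(k,n)) = ∏_{i=1}^r [ f(p_i^{s_i}) + (p_i − 1)·Σ_{b=1}^{s_i} p_i^{b−1}·f(p_i^{s_i − b}) ]. -/

import Mathlib

open Finset

/-! Counting `k ∈ [1, n]` by `d = gcd(k, n)` gives `∑ₖ f(gcd(k, n)) = ∑_{d ∣ n} f(d) φ(n/d)`, the
Dirichlet convolution `f * φ` at `n`. A convolution of multiplicative functions is multiplicative,
so it suffices to evaluate at `p^s`, where `φ(p^b) = p^(b-1)(p-1)` gives the factor of the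
product. -/

theorem Finset.sum_Icc_one_eq_sum_range {M : Type*} [AddCommMonoid M] (h : ℕ → M) {n : ℕ}
    (hn : h n = h 0) : ∑ k ∈ Icc 1 n, h k = ∑ k ∈ range n, h k := by
  rcases Nat.eq_zero_or_pos n with rfl | hpos
  · rfl
  rw [← Ico_add_one_right_eq_Icc, sum_Ico_succ_top hpos, range_eq_Ico,
    sum_eq_sum_Ico_succ_bot hpos, hn, add_comm]

theorem Nat.sum_range_gcd_eq_sum_divisors {M : Type*} [AddCommMonoid M] (g : ℕ → M) (n : ℕ) :
    ∑ k ∈ range n, g (n.gcd k) = ∑ d ∈ n.divisors, (n / d).totient • g d := by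
  rcases eq_or_ne n 0 with rfl | hn
  · simp
  rw [← sum_fiberwise_of_maps_to (g := n.gcd) fun k _ ↦ Nat.mem_divisors.2 ⟨n.gcd_dvd_left k, hn⟩]
  refine sum_congr rfl fun d hd ↦ ?_
  rw [Nat.totient_div_of_dvd (Nat.dvd_of_mem_divisors hd), ← sum_const]
  exact sum_congr rfl fun k hk ↦ by rw [(mem_filter.1 hk).2]

namespace ArithmeticFunction

def totient : ArithmeticFunction ℕ := ⟨Nat.totient, Nat.totient_zero⟩

@[simp]
theorem totient_apply (n : ℕ) : totient n = n.totient := rfl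

theorem isMultiplicative_totient : totient.IsMultiplicative :=
  ⟨Nat.totient_one, Nat.totient_mul⟩

variable {R : Type*}

def ofFun [Zero R] (f : ℕ → R) : ArithmeticFunction R := ⟨fun n ↦ if n = 0 then 0 else f n, rfl⟩

theorem ofFun_apply [Zero R] (f : ℕ → R) {n : ℕ} (hn : n ≠ 0) : ofFun f n = f n := if_neg hn

theorem isMultiplicative_ofFun [MonoidWithZero R] {f : ℕ → R} (h1 : f 1 = 1)
    (hmul : ∀ a b : ℕ, a.Coprime b → f (a * b) = f a * f b) : (ofFun f).IsMultiplicative := by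
  refine IsMultiplicative.iff_ne_zero.2 ⟨(ofFun_apply f one_ne_zero).trans h1, fun ha hb hab ↦ ?_⟩
  rw [ofFun_apply f (mul_ne_zero ha hb), ofFun_apply f ha, ofFun_apply f hb, hmul _ _ hab]

theorem sum_Icc_gcd_eq_mul_totient_apply [Semiring R] (f : ArithmeticFunction R) (n : ℕ) :
    ∑ k ∈ Icc 1 n, f (k.gcd n) = (f * totient) n := by
  rw [mul_apply, Nat.sum_divisorsAntidiagonal fun x y ↦ f x * (totient : ArithmeticFunction R) y,
    sum_Icc_one_eq_sum_range (fun k ↦ f (k.gcd n)) (by simp)]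
  simp_rw [Nat.gcd_comm _ n, Nat.sum_range_gcd_eq_sum_divisors, nsmul_eq_mul']
  rfl

theorem mul_totient_apply_prime_pow [CommRing R] (f : ArithmeticFunction R) {p : ℕ}
    (hp : p.Prime) (s : ℕ) :
    (f * totient) (p ^ s) =
      f (p ^ s) + ((p : R) - 1) * ∑ b ∈ Icc 1 s, (p : R) ^ (b - 1) * f (p ^ (s - b)) := by
  rw [mul_apply, Nat.sum_divisorsAntidiagonal' fun x y ↦ f x * (totient : ArithmeticFunction R) y,
    Nat.sum_divisors_prime_pow hp, sum_range_succ', mul_sum, ← Ico_add_one_right_eq_Icc,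
    sum_Ico_eq_sum_range, add_tsub_cancel_right]
  simp only [pow_zero, Nat.div_one, natCoe_apply, totient_apply, Nat.totient_one, Nat.cast_one,
    mul_one, add_comm 1, add_tsub_cancel_right]
  rw [add_comm]
  congr 1
  refine sum_congr rfl fun j hj ↦ ?_
  rw [Nat.pow_div (mem_range.1 hj) hp.pos, Nat.totient_prime_pow_succ hp,
    Nat.cast_mul, Nat.cast_pow, Nat.cast_pred hp.pos]
  ring

end ArithmeticFunction

open ArithmeticFunction

theorem sum_f_gcd_prime_factorization_general (f : ℕ → ℂ) (hf1 : f 1 = 1)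
    (hf : ∀ a b : ℕ, Nat.Coprime a b → f (a * b) = f a * f b)
    (r : ℕ) (p s : Fin r → ℕ) (n : ℕ)
    (hp : ∀ i, (p i).Prime) (hpinj : Function.Injective p)
    (hn : n = ∏ i, p i ^ s i) :
    ∑ k ∈ Finset.Icc 1 n, f (Nat.gcd k n) =
      ∏ i, (f (p i ^ s i) +
        ((p i : ℂ) - 1) * ∑ b ∈ Finset.Icc 1 (s i),
          (p i : ℂ) ^ (b - 1) * f (p i ^ (s i - b))) := by
  have hF : (ofFun f * totient).IsMultiplicative :=
    (isMultiplicative_ofFun hf1 hf).mul isMultiplicative_totient.natCast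
  calc ∑ k ∈ Icc 1 n, f (k.gcd n)
      = ∑ k ∈ Icc 1 n, ofFun f (k.gcd n) :=
        sum_congr rfl fun k hk ↦
          (ofFun_apply f (Nat.gcd_pos_of_pos_left n (mem_Icc.1 hk).1).ne').symm
    _ = ∏ i, (ofFun f * totient) (p i ^ s i) := by
        rw [sum_Icc_gcd_eq_mul_totient_apply, hn, hF.map_prod _ _ fun i _ j _ hij ↦
          Nat.coprime_pow_primes _ _ (hp i) (hp j) (hpinj.ne hij)]
    _ = _ := prod_congr rfl fun i _ ↦ by
        simp only [mul_totient_apply_prime_pow _ (hp i),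
          ofFun_apply f (pow_ne_zero _ (hp i).ne_zero)]

theorem sum_f_gcd_prime_factorization (f : ℕ → ℂ) (hf1 : f 1 = 1)
    (hf : ∀ a b : ℕ, Nat.Coprime a b → f (a * b) = f a * f b)
    (r : ℕ) (p s : Fin r → ℕ) (n : ℕ)
    (hp : ∀ i, (p i).Prime) (hpinj : Function.Injective p)
    (hs : ∀ i, 1 ≤ s i) (hn : n = ∏ i, p i ^ s i) :
    ∑ k ∈ Finset.Icc 1 n, f (Nat.gcd k n) =
      ∏ i, (f (p i ^ s i) +
        ((p i : ℂ) - 1) * ∑ b ∈ Finset.Icc 1 (s i),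
          (p i : ℂ) ^ (b - 1) * f (p i ^ (s i - b))) :=
  sum_f_gcd_prime_factorization_general f hf1 hf r p s n hp hpinj hn
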